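/- arXiv:1710.00965 — 3 statements merged into one kernel-verified Lean document; each statement's English description precedes it below -/
import Mathlib

section
/- Let k ≥ 2 and let (X̃_1,Ỹ_1),…,(X̃_k,Ỹ_k) be i.i.d. pairs such that X̃_i is independent of Ỹ_i and both have continuous distributions. Let τ_k = (1/(k(k−1))) Σ_{i≠j} sign(X̃_i−X̃_j) sign(Ỹ_i−Ỹ_j) be the sample Kendall tau. Then for every r > 0, P(τ_k·√(9k(k−1)/(2(2k+5))) > r) ≤ exp(−r²/9). -/
open MeasureTheory ProbabilityTheory Filter

noncomputable section

/-- Sum of `sign(X_i−X_j)·sign(Y_i−Y_j)` over ordered pairs of distinct indices in `s`. -/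
def concordSum {n : ℕ} (s : Finset (Fin n)) (X Y : Fin n → ℝ) : ℝ :=
  ∑ i ∈ s, ∑ j ∈ s, if i ≠ j then Real.sign (X i - X j) * Real.sign (Y i - Y j) else 0

/-- Sample Kendall tau of `{(X_i, Y_i)}_{i=1}^n`. -/
def kendallTau (n : ℕ) (X Y : Fin n → ℝ) : ℝ :=
  concordSum Finset.univ X Y / (n * ((n : ℝ) - 1))

/-- `K(t_X, t_Y)`: indices whose coordinates are above both thresholds. -/
def trSet (n : ℕ) (X Y : Fin n → ℝ) (tX tY : ℝ) : Finset (Fin n) :=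
  Finset.univ.filter fun i => tX ≤ X i ∧ tY ≤ Y i

/-- `n_{t_X, t_Y}`. -/
def trCount (n : ℕ) (X Y : Fin n → ℝ) (tX tY : ℝ) : ℕ := (trSet n X Y tX tY).card

/-- `τ(t_X, t_Y)`: sample Kendall tau over the indices above both thresholds. -/
def trTau (n : ℕ) (X Y : Fin n → ℝ) (tX tY : ℝ) : ℝ :=
  concordSum (trSet n X Y tX tY) X Y /
    (trCount n X Y tX tY * ((trCount n X Y tX tY : ℝ) - 1))

/-- The normalizing factor `W(x) = √(9x(x−1)/(2(2x+5)))`. -/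
def Wfun (x : ℝ) : ℝ := Real.sqrt (9 * x * (x - 1) / (2 * (2 * x + 5)))

/-- `τ̃(t_X, t_Y) = τ(t_X, t_Y) · W(n_{t_X, t_Y})`. -/
def trTauTilde (n : ℕ) (X Y : Fin n → ℝ) (tX tY : ℝ) : ℝ :=
  trTau n X Y tX tY * Wfun (trCount n X Y tX tY)

/-- `τ̃` as extended real, with the convention that it is `−∞` when `n_{t_X,t_Y} ≤ 1`. -/
def trTauTildeE (n : ℕ) (X Y : Fin n → ℝ) (tX tY : ℝ) : EReal :=
  if 2 ≤ trCount n X Y tX tY then ((trTauTilde n X Y tX tY : ℝ) : EReal) else ⊥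

/-- `j`-th order statistic (1-indexed, `j`-th smallest value). -/
def orderStat {n : ℕ} (X : Fin n → ℝ) (j : ℕ) : ℝ :=
  ((List.ofFn X).mergeSort (· ≤ ·)).getD (j - 1) 0

/-- The scan statistic `τ* = max_{j,k ≥ ⌊n/2⌋} τ̃(X_{(j)}, Y_{(k)})`. -/
def tauStar (n : ℕ) (X Y : Fin n → ℝ) : EReal :=
  (Finset.Icc (n / 2) n).sup fun j =>
    (Finset.Icc (n / 2) n).sup fun k =>
      trTauTildeE n X Y (orderStat X j) (orderStat Y k)

/-- Event that both independent copies exceed the thresholds. -/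
def pairAbove (ηX ηY : ℝ) : Set ((ℝ × ℝ) × ℝ × ℝ) :=
  {p | ηX < p.1.1 ∧ ηY < p.1.2 ∧ ηX < p.2.1 ∧ ηY < p.2.2}

/-- `T(η_X, η_Y)`: concordance minus discordance probability of two independent copies,
conditionally on both exceeding the thresholds. -/
def Tpop (ν : Measure (ℝ × ℝ)) (ηX ηY : ℝ) : ℝ :=
  (((ν.prod ν)[|pairAbove ηX ηY]) {p | 0 < (p.1.1 - p.2.1) * (p.1.2 - p.2.2)}).toReal -
  (((ν.prod ν)[|pairAbove ηX ηY]) {p | (p.1.1 - p.2.1) * (p.1.2 - p.2.2) < 0}).toReal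

/-- `V(η_X, η_Y) = 1 + F(η_X, η_Y) − F_X(η_X) − F_Y(η_Y)`. -/
def Vpop (ν : Measure (ℝ × ℝ)) (ηX ηY : ℝ) : ℝ :=
  1 + (ν {p | p.1 ≤ ηX ∧ p.2 ≤ ηY}).toReal - (ν {p | p.1 ≤ ηX}).toReal
    - (ν {p | p.2 ≤ ηY}).toReal

/-- Both marginal distributions of `ν` are atomless (continuous marginal CDFs). -/
def ContinuousMarginals (ν : Measure (ℝ × ℝ)) : Prop :=
  ∀ x : ℝ, ν {p | p.1 = x} = 0 ∧ ν {p | p.2 = x} = 0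

/-- The uniform distribution on `[0,1]`. -/
def unif01 : Measure ℝ := volume.restrict (Set.Icc 0 1)

/-- The law of `n` i.i.d. pairs of independent `Uniform(0,1)` random variables. -/
def nullLaw (n : ℕ) : Measure (Fin n → ℝ × ℝ) := Measure.pi fun _ => unif01.prod unif01

/-- `τ*` as a function on the canonical sample space. -/
def tauStarCanon (n : ℕ) (v : Fin n → ℝ × ℝ) : EReal :=
  tauStar n (fun i => (v i).1) (fun i => (v i).2)

/-- The `(1−α)`-quantile of the null distribution of `τ*` from `n` i.i.d. pairs of
independent `Uniform(0,1)` random variables. -/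
def qQuantile (α : ℝ) (n : ℕ) : EReal :=
  sInf {q : EReal | nullLaw n {v | q < tauStarCanon n v} ≤ ENNReal.ofReal α}

/-!
Hoeffding's argument for U-statistics. Write `h(z, z') = sign(x - x') sign(y - y')` and
`m = ⌊k/2⌋`. Averaging over all permutations `σ` of the sample expresses `τ_k` as the uniform
convex combination of the block statistics `(1/m) ∑_{j<m} h(Z_{σ(a_j)}, Z_{σ(b_j)})` over `m`
disjoint pairs `{a_j, b_j}`. Since `X̃` and `Ỹ` are independent, `E h(Z, Z') = E sign(X̃ - X̃') ·
E sign(Ỹ - Ỹ') = 0` by symmetry, so by Hoeffding's lemma each block statistic is an average of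
`m` independent `1`-sub-Gaussian variables, hence `1/m`-sub-Gaussian. Convexity of `exp` passes
this bound on the moment generating function to `τ_k`, and the Chernoff bound
`exp(-m s² / 2)` at `s = r / W(k)` is at most `exp(-r²/9)` because `2 W(k)² ≤ 9 m`.
-/

open scoped NNReal

namespace ProbabilityTheory

variable {Ω : Type*} [MeasurableSpace Ω] {μ : Measure Ω}

lemma iIndepFun.pairs {ι κ β : Type*} [Fintype κ] [MeasurableSpace β] {Z : ι → Ω → β}
    (hZ : ∀ i, AEMeasurable (Z i) μ) (h : iIndepFun Z μ) {e : κ ⊕ κ → ι} (he : e.Injective) :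
    iIndepFun (fun j ω => (Z (e (.inl j)) ω, Z (e (.inr j)) ω)) μ := by
  have := h.isProbabilityMeasure
  have hpair : ∀ j, μ.map (fun ω => (Z (e (.inl j)) ω, Z (e (.inr j)) ω)) =
      (μ.map (Z (e (.inl j)))).prod (μ.map (Z (e (.inr j)))) := fun j =>
    (indepFun_iff_map_prod_eq_prod_map_map (hZ _) (hZ _)).1
      (h.indepFun (he.ne Sum.inl_ne_inr))
  have hF := (measurePreserving_sumPiEquivProdPi fun t => μ.map (Z (e t))).trans
    (measurePreserving_arrowProdEquivProdArrow β β κ (fun j => μ.map (Z (e (.inl j))))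
      (fun j => μ.map (Z (e (.inr j))))).symm
  rw [iIndepFun_iff_map_fun_eq_pi_map (fun j => (hZ _).prodMk (hZ _))]
  simp_rw [hpair, ← hF.map_eq, ← (h.precomp he).map_fun_eq_pi_map (fun t => hZ (e t))]
  rw [AEMeasurable.map_map_of_aemeasurable hF.measurable.aemeasurable
    (aemeasurable_pi_lambda _ fun t => hZ (e t))]
  rfl

lemma HasSubgaussianMGF.sum_mul_of_sum_eq_one {ι : Type*} {X : ι → Ω → ℝ} {c : ℝ≥0}
    {s : Finset ι} {w : ι → ℝ} (hw₀ : ∀ i ∈ s, 0 ≤ w i) (hw₁ : ∑ i ∈ s, w i = 1)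
    (h : ∀ i ∈ s, HasSubgaussianMGF (X i) c μ) :
    HasSubgaussianMGF (fun ω => ∑ i ∈ s, w i * X i ω) c μ := by
  have hjensen : ∀ t ω, Real.exp (t * ∑ i ∈ s, w i * X i ω) ≤
      ∑ i ∈ s, w i * Real.exp (t * X i ω) := fun t ω => by
    simpa only [Finset.mul_sum, smul_eq_mul, mul_left_comm t] using
      convexOn_exp.map_sum_le hw₀ hw₁ (fun i _ => Set.mem_univ (t * X i ω))
  have hint : ∀ t, Integrable (fun ω => ∑ i ∈ s, w i * Real.exp (t * X i ω)) μ := fun t =>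
    integrable_finsetSum _ fun i hi => ((h i hi).integrable_exp_mul t).const_mul _
  have hmeas : AEStronglyMeasurable (fun ω => ∑ i ∈ s, w i * X i ω) μ :=
    Finset.aestronglyMeasurable_fun_sum _ fun i hi => (h i hi).aestronglyMeasurable.const_mul _
  have hint' : ∀ t, Integrable (fun ω => Real.exp (t * ∑ i ∈ s, w i * X i ω)) μ := fun t =>
    (hint t).mono' (by fun_prop) (ae_of_all _ fun ω => by
      rw [Real.norm_eq_abs, abs_of_pos (Real.exp_pos _)]; exact hjensen t ω)
  refine ⟨hint', fun t => ?_⟩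
  calc mgf (fun ω => ∑ i ∈ s, w i * X i ω) μ t
      ≤ ∫ ω, ∑ i ∈ s, w i * Real.exp (t * X i ω) ∂μ :=
        integral_mono (hint' t) (hint t) (hjensen t)
    _ = ∑ i ∈ s, w i * mgf (X i) μ t := by
        rw [integral_finsetSum _ fun i hi => ((h i hi).integrable_exp_mul t).const_mul _]
        simp only [integral_const_mul, mgf]
    _ ≤ ∑ i ∈ s, w i * Real.exp (c * t ^ 2 / 2) :=
        Finset.sum_le_sum fun i hi => mul_le_mul_of_nonneg_left ((h i hi).mgf_le t) (hw₀ i hi)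
    _ = Real.exp (c * t ^ 2 / 2) := by rw [← Finset.sum_mul, hw₁, one_mul]

end ProbabilityTheory

namespace Equiv.Perm

variable {α : Type*}

lemma exists_apply_eq_and_apply_eq [DecidableEq α] {p q p' q' : α} (hpq : p ≠ q)
    (hpq' : p' ≠ q') :
    ∃ π : Perm α, π p' = p ∧ π q' = q := by
  set x := swap p' p q'
  have hx : x ≠ p := by
    rw [Ne, swap_apply_eq_iff, swap_apply_right]
    exact hpq'.symm
  refine ⟨swap x q * swap p' p, ?_, ?_⟩
  · rw [mul_apply, swap_apply_left, swap_apply_of_ne_of_ne hx.symm hpq]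
  · rw [mul_apply, swap_apply_left]

variable [Fintype α] {M : Type*} [AddCommMonoid M]

lemma sum_apply_apply_eq_of_ne [DecidableEq α] (f : α → α → M) {p q p' q' : α} (hpq : p ≠ q)
    (hpq' : p' ≠ q') :
    ∑ σ : Perm α, f (σ p) (σ q) = ∑ σ : Perm α, f (σ p') (σ q') := by
  obtain ⟨π, hp, hq⟩ := exists_apply_eq_and_apply_eq hpq hpq'
  refine Fintype.sum_equiv (Equiv.mulRight π) _ _ fun σ => ?_
  simp [hp, hq]

lemma sum_offDiag_apply_apply (σ : Perm α) (f : α → α → M) :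
    ∑ x ∈ Finset.univ.offDiag, f (σ x.1) (σ x.2) = ∑ x ∈ Finset.univ.offDiag, f x.1 x.2 :=
  Finset.sum_nbij' (Prod.map σ σ) (Prod.map σ.symm σ.symm) (by simp) (by simp) (by simp)
    (by simp) (fun _ _ => rfl)

lemma card_mul_sum_apply_apply [DecidableEq α] (f : α → α → M) {p q : α} (hpq : p ≠ q) :
    (Fintype.card α * (Fintype.card α - 1)) • ∑ σ : Perm α, f (σ p) (σ q) =
      (Fintype.card α).factorial • ∑ x ∈ Finset.univ.offDiag, f x.1 x.2 := by
  calc (Fintype.card α * (Fintype.card α - 1)) • ∑ σ : Perm α, f (σ p) (σ q)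
      = ∑ x ∈ Finset.univ.offDiag, ∑ σ : Perm α, f (σ x.1) (σ x.2) := by
        rw [Finset.sum_congr rfl fun x hx =>
          (sum_apply_apply_eq_of_ne f hpq (Finset.mem_offDiag.1 hx).2.2).symm, Finset.sum_const,
          Finset.offDiag_card, Finset.card_univ, Nat.mul_sub_one]
    _ = ∑ σ : Perm α, ∑ x ∈ Finset.univ.offDiag, f (σ x.1) (σ x.2) := Finset.sum_comm
    _ = _ := by simp only [sum_offDiag_apply_apply, Finset.sum_const, Finset.card_univ,
          Fintype.card_perm]

end Equiv.Perm

lemma Real.measurable_sign : Measurable Real.sign := by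
  have : Real.sign = fun r => if r < 0 then -1 else if 0 < r then 1 else 0 := rfl
  rw [this]
  exact Measurable.ite measurableSet_Iio measurable_const
    (Measurable.ite measurableSet_Ioi measurable_const measurable_const)

lemma Real.abs_sign_le_one (x : ℝ) : |Real.sign x| ≤ 1 := by
  rcases Real.sign_apply_eq x with h | h | h <;> simp [h]

def concordance (z z' : ℝ × ℝ) : ℝ := Real.sign (z.1 - z'.1) * Real.sign (z.2 - z'.2)

lemma measurable_concordance : Measurable fun p : (ℝ × ℝ) × (ℝ × ℝ) => concordance p.1 p.2 :=
  (Real.measurable_sign.comp (by fun_prop)).mul (Real.measurable_sign.comp (by fun_prop))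

lemma concordance_mem_Icc (z z' : ℝ × ℝ) : concordance z z' ∈ Set.Icc (-1) 1 := by
  rw [Set.mem_Icc, ← abs_le, concordance, abs_mul]
  exact mul_le_one₀ (Real.abs_sign_le_one _) (abs_nonneg _) (Real.abs_sign_le_one _)

lemma integral_integral_sign_sub_eq_zero (ν : Measure ℝ) [IsFiniteMeasure ν] :
    ∫ x, ∫ x', Real.sign (x - x') ∂ν ∂ν = 0 := by
  have hint : Integrable (fun z : ℝ × ℝ => Real.sign (z.1 - z.2)) (ν.prod ν) :=
    Integrable.of_mem_Icc (-1) 1 (Real.measurable_sign.comp (by fun_prop)).aemeasurable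
      (ae_of_all _ fun z => abs_le.1 (Real.abs_sign_le_one _))
  have hswap := integral_prod_swap (fun z : ℝ × ℝ => Real.sign (z.1 - z.2)) (μ := ν) (ν := ν)
  have hneg : ∀ z : ℝ × ℝ, Real.sign (z.2 - z.1) = -Real.sign (z.1 - z.2) := fun z => by
    rw [← Real.sign_neg, neg_sub]
  simp only [Prod.fst_swap, Prod.snd_swap, hneg, integral_neg] at hswap
  rw [← integral_prod _ hint]
  linarith

lemma integral_concordance_eq_zero (νX νY : Measure ℝ) [IsFiniteMeasure νX]
    [IsFiniteMeasure νY] :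
    ∫ p, concordance p.1 p.2 ∂((νX.prod νY).prod (νX.prod νY)) = 0 := by
  have hint : Integrable (fun p : (ℝ × ℝ) × (ℝ × ℝ) => concordance p.1 p.2)
      ((νX.prod νY).prod (νX.prod νY)) :=
    Integrable.of_mem_Icc (-1) 1 measurable_concordance.aemeasurable
      (ae_of_all _ fun p => concordance_mem_Icc _ _)
  rw [integral_prod _ hint]
  have hinner : ∀ z : ℝ × ℝ, ∫ z', concordance z z' ∂(νX.prod νY) =
      (∫ x', Real.sign (z.1 - x') ∂νX) * ∫ y', Real.sign (z.2 - y') ∂νY := fun z =>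
    integral_prod_mul (fun x' => Real.sign (z.1 - x')) (fun y' => Real.sign (z.2 - y'))
  simp only [hinner]
  rw [integral_prod_mul (fun x => ∫ x', Real.sign (x - x') ∂νX)
    (fun y => ∫ y', Real.sign (y - y') ∂νY), integral_integral_sign_sub_eq_zero, zero_mul]

lemma hasSubgaussianMGF_concordance (νX νY : Measure ℝ) [IsProbabilityMeasure νX]
    [IsProbabilityMeasure νY] :
    HasSubgaussianMGF (fun p => concordance p.1 p.2) 1 ((νX.prod νY).prod (νX.prod νY)) := by
  have := hasSubgaussianMGF_of_mem_Icc_of_integral_eq_zero measurable_concordance.aemeasurable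
    (ae_of_all _ fun p => concordance_mem_Icc p.1 p.2) (integral_concordance_eq_zero νX νY)
  convert this
  norm_num

lemma concordSum_univ_eq_sum_offDiag {k : ℕ} (Z : Fin k → ℝ × ℝ) :
    concordSum Finset.univ (fun i => (Z i).1) (fun i => (Z i).2) =
      ∑ x ∈ Finset.univ.offDiag, concordance (Z x.1) (Z x.2) := by
  rw [concordSum, ← Fintype.sum_prod_type', ← Finset.sum_filter]
  congr 1
  ext x
  simp [Finset.mem_offDiag]

lemma kendallTau_eq_sum_perm {k m : ℕ} (hm : 0 < m) {e : Fin m ⊕ Fin m → Fin k}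
    (he : e.Injective) (Z : Fin k → ℝ × ℝ) :
    kendallTau k (fun i => (Z i).1) (fun i => (Z i).2) =
      ∑ σ : Equiv.Perm (Fin k), (k.factorial : ℝ)⁻¹ *
        ∑ j : Fin m, (m : ℝ)⁻¹ * concordance (Z (σ (e (.inl j)))) (Z (σ (e (.inr j)))) := by
  have hk : 2 ≤ k := by
    have := Fintype.card_le_of_injective e he
    simp only [Fintype.card_sum, Fintype.card_fin] at this
    omega
  have hkk : (k * (k - 1) : ℝ) ≠ 0 := by
    have : (2 : ℝ) ≤ k := by exact_mod_cast hk
    nlinarith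
  have hpair : ∀ j : Fin m, (k * (k - 1) : ℝ) *
      ∑ σ : Equiv.Perm (Fin k), concordance (Z (σ (e (.inl j)))) (Z (σ (e (.inr j)))) =
        k.factorial * ∑ x ∈ Finset.univ.offDiag, concordance (Z x.1) (Z x.2) := fun j => by
    have := Equiv.Perm.card_mul_sum_apply_apply (fun a b => concordance (Z a) (Z b))
      (he.ne (Sum.inl_ne_inr (a := j) (b := j)))
    simp only [nsmul_eq_mul, Fintype.card_fin] at this
    push_cast [show 1 ≤ k by omega] at this
    exact this
  set D := ∑ x ∈ Finset.univ.offDiag, concordance (Z x.1) (Z x.2)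
  rw [kendallTau, concordSum_univ_eq_sum_offDiag]
  calc D / (k * (k - 1))
      = (k.factorial : ℝ)⁻¹ * ((m : ℝ)⁻¹ * ∑ _j : Fin m, (k.factorial * D / (k * (k - 1)))) := by
        rw [Finset.sum_const, Finset.card_univ, Fintype.card_fin, nsmul_eq_mul]
        field_simp
    _ = (k.factorial : ℝ)⁻¹ * ((m : ℝ)⁻¹ * ∑ j : Fin m,
          ∑ σ : Equiv.Perm (Fin k), concordance (Z (σ (e (.inl j)))) (Z (σ (e (.inr j))))) := by
        congr 2
        refine Finset.sum_congr rfl fun j _ => ?_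
        rw [← hpair j, mul_div_cancel_left₀ _ hkk]
    _ = _ := by
        simp_rw [Finset.mul_sum]
        exact Finset.sum_comm

namespace ProbabilityTheory

variable {Ω : Type*} [MeasurableSpace Ω] {μ : Measure Ω} {νX νY : Measure ℝ}
  [IsProbabilityMeasure νX] [IsProbabilityMeasure νY]

lemma hasSubgaussianMGF_concordance_of_ne {ι : Type*} {Z : ι → Ω → ℝ × ℝ}
    (hZ : ∀ i, AEMeasurable (Z i) μ) (hind : iIndepFun Z μ)
    (hlaw : ∀ i, μ.map (Z i) = νX.prod νY) {a b : ι} (hab : a ≠ b) :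
    HasSubgaussianMGF (fun ω => concordance (Z a ω) (Z b ω)) 1 μ := by
  have := hind.isProbabilityMeasure
  have hmap : μ.map (fun ω => (Z a ω, Z b ω)) = (νX.prod νY).prod (νX.prod νY) := by
    rw [(indepFun_iff_map_prod_eq_prod_map_map (hZ a) (hZ b)).1 (hind.indepFun hab), hlaw, hlaw]
  exact (hmap ▸ hasSubgaussianMGF_concordance νX νY).of_map ((hZ a).prodMk (hZ b))

lemma hasSubgaussianMGF_kendallTau {k : ℕ} (hk : 2 ≤ k) {Z : Fin k → Ω → ℝ × ℝ}
    (hZ : ∀ i, AEMeasurable (Z i) μ) (hind : iIndepFun Z μ)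
    (hlaw : ∀ i, μ.map (Z i) = νX.prod νY) :
    HasSubgaussianMGF (fun ω => kendallTau k (fun i => (Z i ω).1) (fun i => (Z i ω).2))
      ((k / 2 : ℕ) : ℝ≥0)⁻¹ μ := by
  set m := k / 2
  have hm : 0 < m := by omega
  set e : Fin m ⊕ Fin m → Fin k := Fin.castLE (by omega) ∘ finSumFinEquiv
  have he : e.Injective := (Fin.castLE_injective _).comp finSumFinEquiv.injective
  have hblock : ∀ σ : Equiv.Perm (Fin k), HasSubgaussianMGF (fun ω => ∑ j : Fin m,
      (m : ℝ)⁻¹ * concordance (Z (σ (e (.inl j))) ω) (Z (σ (e (.inr j))) ω)) (m : ℝ≥0)⁻¹ μ := by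
    intro σ
    have hpairs := (hind.pairs hZ (σ.injective.comp he)).comp
      (fun _ p => (m : ℝ)⁻¹ * concordance p.1 p.2)
      fun _ => measurable_concordance.const_mul _
    have hsum := HasSubgaussianMGF.sum_of_iIndepFun hpairs (s := Finset.univ) fun j _ =>
      (hasSubgaussianMGF_concordance_of_ne hZ hind hlaw
        ((σ.injective.comp he).ne (Sum.inl_ne_inr (a := j) (b := j)))).const_mul (m : ℝ)⁻¹
    have hc : ∑ _j : Fin m, (⟨(m : ℝ)⁻¹ ^ 2, sq_nonneg _⟩ * 1 : ℝ≥0) = (m : ℝ≥0)⁻¹ := by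
      ext
      rw [NNReal.coe_sum]
      change ∑ _j : Fin m, (m : ℝ)⁻¹ ^ 2 * 1 = (m : ℝ)⁻¹
      rw [Finset.sum_const, Finset.card_univ, Fintype.card_fin, nsmul_eq_mul]
      field_simp
    rw [hc] at hsum
    exact hsum
  have hw : ∑ _σ : Equiv.Perm (Fin k), ((k.factorial : ℝ))⁻¹ = 1 := by
    rw [Finset.sum_const, Finset.card_univ, Fintype.card_perm, Fintype.card_fin, nsmul_eq_mul,
      mul_inv_cancel₀ (by positivity)]
  refine (HasSubgaussianMGF.sum_mul_of_sum_eq_one (fun _ _ => by positivity) hw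
    fun σ _ => hblock σ).congr (ae_of_all _ fun ω => ?_)
  exact (kendallTau_eq_sum_perm hm he fun i => Z i ω).symm

end ProbabilityTheory

lemma two_mul_Wfun_sq_le (k : ℕ) : 2 * Wfun k ^ 2 ≤ 9 * (k / 2 : ℕ) := by
  have hk : (0 : ℝ) ≤ k * (k - 1) := by
    rcases k with _ | k
    · simp
    · push_cast; nlinarith
  have hhalf : (k : ℝ) - 1 ≤ 2 * (k / 2 : ℕ) := by
    have : k ≤ 2 * (k / 2) + 1 := by omega
    have : (k : ℝ) ≤ 2 * (k / 2 : ℕ) + 1 := by exact_mod_cast this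
    linarith
  rw [Wfun, Real.sq_sqrt (div_nonneg (by linarith) (by positivity)), ← mul_div_assoc,
    div_le_iff₀ (by positivity)]
  nlinarith

lemma Wfun_pos {k : ℕ} (hk : 2 ≤ k) : 0 < Wfun k := by
  have : (2 : ℝ) ≤ k := by exact_mod_cast hk
  exact Real.sqrt_pos.2 (div_pos (by nlinarith) (by positivity))

theorem kendallTau_tail_bound_general {Ω : Type*} [MeasurableSpace Ω]
    (μ : Measure Ω) [IsProbabilityMeasure μ] (k : ℕ) (hk : 2 ≤ k)
    (X Y : Fin k → Ω → ℝ) (νX νY : Measure ℝ)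
    [IsProbabilityMeasure νX] [IsProbabilityMeasure νY]
    (hindep : iIndepFun (fun i ω => (X i ω, Y i ω)) μ)
    (hlaw : ∀ i, Measure.map (fun ω => (X i ω, Y i ω)) μ = νX.prod νY) :
    ∀ r : ℝ, 0 < r →
      (μ {ω | r < kendallTau k (fun i => X i ω) (fun i => Y i ω) * Wfun k}).toReal
        ≤ Real.exp (-(r ^ 2) / 9) := by
  intro r hr
  have hZ : ∀ i, AEMeasurable (fun ω => (X i ω, Y i ω)) μ := fun i =>
    .of_map_ne_zero (hlaw i ▸ IsProbabilityMeasure.ne_zero _)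
  have hW := Wfun_pos hk
  have hm : (0 : ℝ) < (k / 2 : ℕ) := by exact_mod_cast (by omega : 0 < k / 2)
  calc (μ {ω | r < kendallTau k (fun i => X i ω) (fun i => Y i ω) * Wfun k}).toReal
      ≤ μ.real {ω | r / Wfun k ≤ kendallTau k (fun i => X i ω) (fun i => Y i ω)} :=
        measureReal_mono fun ω hω => (div_le_iff₀ hW).2 (le_of_lt hω)
    _ ≤ Real.exp (-(r / Wfun k) ^ 2 / (2 * ((k / 2 : ℕ) : ℝ≥0)⁻¹)) :=
        (hasSubgaussianMGF_kendallTau hk hZ hindep hlaw).measure_ge_le (by positivity)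
    _ ≤ Real.exp (-(r ^ 2) / 9) := by
        refine Real.exp_le_exp.2 ?_
        push_cast
        rw [div_pow, neg_div, neg_div, neg_le_neg_iff, div_div,
          div_le_div_iff₀ (by positivity) (by positivity)]
        have := two_mul_Wfun_sq_le k
        field_simp
        nlinarith [sq_nonneg r]

/-- Hoeffding-type tail bound for the normalized sample Kendall tau of `k ≥ 2`
i.i.d. pairs with independent, continuously distributed coordinates. -/
theorem kendallTau_tail_bound {Ω : Type*} [MeasurableSpace Ω]
    (μ : Measure Ω) [IsProbabilityMeasure μ] (k : ℕ) (hk : 2 ≤ k)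
    (X Y : Fin k → Ω → ℝ) (νX νY : Measure ℝ)
    [IsProbabilityMeasure νX] [IsProbabilityMeasure νY]
    (hcX : ∀ x : ℝ, νX {x} = 0) (hcY : ∀ y : ℝ, νY {y} = 0)
    (hindep : iIndepFun (fun i ω => (X i ω, Y i ω)) μ)
    (hlaw : ∀ i, Measure.map (fun ω => (X i ω, Y i ω)) μ = νX.prod νY) :
    ∀ r : ℝ, 0 < r →
      (μ {ω | r < kendallTau k (fun i => X i ω) (fun i => Y i ω) * Wfun k}).toReal
        ≤ Real.exp (-(r ^ 2) / 9) :=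
  kendallTau_tail_bound_general μ k hk X Y νX νY hindep hlaw

end
end

section
/- Let (X,Y) have joint CDF F with continuous marginals, fix thresholds η_X, η_Y with P(X > η_X, Y > η_Y) > 0, and let F_{η_X,η_Y} denote the conditional joint CDF of (X,Y) given X > η_X and Y > η_Y, with marginals F_{η_X} and F_{η_Y}. Suppose F_{η_X,η_Y} is positively quadrant dependent: F_{η_X,η_Y}(x,y) ≥ F_{η_X}(x)·F_{η_Y}(y) for all x,y, with strict inequality at some point (x₀,y₀). Then T(η_X,η_Y) > 0, where T(η_X,η_Y) = P((X−X̃)(Y−Ỹ)>0 | X,X̃>η_X, Y,Ỹ>η_Y) − P((X−X̃)(Y−Ỹ)<0 | X,X̃>η_X, Y,Ỹ>η_Y) for independent copies (X,Y), (X̃,Ỹ) of F. -/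
open MeasureTheory ProbabilityTheory Filter

noncomputable section

/-!
Let `μ` be the conditional law given `X > η_X, Y > η_Y`, with joint CDF `F` and marginals
`μ₁, μ₂` with CDFs `F₁, F₂`; the conditional law of the two copies is `μ ⊗ μ`. Since ties are
null, concordance and discordance probabilities add up to one and `T = 4 ∫ F dμ - 1`.
Quadrant dependence gives `∫ F dμ ≥ ∫ F₁(x) F₂(y) dμ`, and the right-hand side equals
`∫ F d(μ₁ ⊗ μ₂)`: write `F₁(x) F₂(y)` as the probability that two further independent copies
fall below `x` and `y` respectively, swap the order of integration and expand the survival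
function of `μ` (`μ₁ ⊗ μ₂` is realised as the law of `(w.1.1, w.2.2)` for `w ∼ μ ⊗ μ`).
Finally `∫ F d(μ₁ ⊗ μ₂) > ∫ F₁ F₂ d(μ₁ ⊗ μ₂) = 1/2 · 1/2`, since `F > F₁ F₂` on a box of
positive `μ₁ ⊗ μ₂`-measure next to the point of strict dependence, which the intermediate value
theorem for the continuous `F₁, F₂` provides.
-/

open Set
open scoped ENNReal

lemma continuous_cdf (κ : Measure ℝ) [IsProbabilityMeasure κ] [NullSingletonClass κ] :
    Continuous (cdf κ) := by
  refine continuous_iff_continuousAt.2 fun x => ?_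
  rw [(cdf κ).mono.continuousAt_iff_leftLim_eq_rightLim, StieltjesFunction.rightLim_eq]
  have h := (cdf κ).measure_singleton x
  rw [measure_cdf, measure_singleton, eq_comm, ENNReal.ofReal_eq_zero, sub_nonpos] at h
  exact le_antisymm ((cdf κ).mono.leftLim_le le_rfl) h

lemma exists_cdf_mem_Ioo (κ : Measure ℝ) [IsProbabilityMeasure κ] [NullSingletonClass κ]
    {x₀ ε : ℝ} (hx₀ : 0 < cdf κ x₀) (hε : 0 < ε) :
    ∃ x, cdf κ x₀ - ε < cdf κ x ∧ cdf κ x < cdf κ x₀ := by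
  set t := cdf κ x₀ - min ε (cdf κ x₀) / 2
  have ht : 0 < t := by have := min_le_right ε (cdf κ x₀); simp only [t]; linarith
  have hbelow : ∃ x, cdf κ x ≤ t := ((tendsto_cdf_atBot κ).eventually (ge_mem_nhds ht)).exists
  obtain ⟨x, hx⟩ := mem_range_of_exists_le_of_exists_ge (continuous_cdf κ) hbelow
    ⟨x₀, by simp only [t]; linarith [lt_min hε hx₀]⟩
  refine ⟨x, ?_, ?_⟩ <;> rw [hx] <;> simp only [t] <;>
    linarith [min_le_left ε (cdf κ x₀), lt_min hε hx₀]

section Atomless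

variable {α : Type*} [MeasurableSpace α] {μ : Measure α} {f : α → ℝ}

lemma ae_ne_of_measure_setOf_eq (h : ∀ x, μ {a | f a = x} = 0) (x : ℝ) : ∀ᵐ a ∂μ, f a ≠ x :=
  ae_iff.2 (by simpa using h x)

lemma measure_prod_self_setOf_eq_eq_zero [SFinite μ] (hf : Measurable f)
    (h : ∀ x, μ {a | f a = x} = 0) : μ.prod μ {w | f w.1 = f w.2} = 0 := by
  have hs : MeasurableSet {w : α × α | f w.1 = f w.2} :=
    measurableSet_eq_fun (hf.comp measurable_fst) (hf.comp measurable_snd)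
  have hslice : ∀ p, μ (Prod.mk p ⁻¹' {w : α × α | f w.1 = f w.2}) = 0 := fun p =>
    (congrArg μ (ext fun _ => eq_comm)).trans (h (f p))
  rw [Measure.prod_apply hs]
  simp only [hslice, lintegral_zero]

lemma lintegral_measure_setOf_le_eq_half [IsProbabilityMeasure μ] (hf : Measurable f)
    (h : ∀ x, μ {a | f a = x} = 0) : ∫⁻ a, μ {b | f b ≤ f a} ∂μ = 2⁻¹ := by
  set s := {w : α × α | f w.2 ≤ f w.1}
  have hs : MeasurableSet s := measurableSet_le (hf.comp measurable_snd) (hf.comp measurable_fst)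
  have hswap : μ.prod μ (Prod.swap ⁻¹' s) = μ.prod μ s :=
    Measure.measurePreserving_swap.measure_preimage hs.nullMeasurableSet
  have hunion : s ∪ Prod.swap ⁻¹' s = univ := by
    ext w; simp [s, le_total]
  have hinter : s ∩ Prod.swap ⁻¹' s = {w | f w.1 = f w.2} := by
    ext w; simp [s, le_antisymm_iff, and_comm]
  -- `s` and its mirror image cover everything, overlap in a null set, and have equal mass
  have key := measure_union_add_inter (μ := μ.prod μ) s (measurable_swap hs)
  rw [hunion, hinter, measure_univ, measure_prod_self_setOf_eq_eq_zero hf h, add_zero, hswap,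
    ← two_mul, eq_comm] at key
  rw [show ∫⁻ a, μ {b | f b ≤ f a} ∂μ = μ.prod μ s from (Measure.prod_apply hs).symm]
  exact ENNReal.eq_inv_of_mul_eq_one_left (by rwa [mul_comm])

lemma exists_measure_setOf_mem_Ioc_ne_zero [IsProbabilityMeasure μ] (hf : Measurable f)
    (h : ∀ x, μ {a | f a = x} = 0) {x₀ ε : ℝ} (hx₀ : 0 < μ.real {a | f a ≤ x₀}) (hε : 0 < ε) :
    ∃ x, μ {a | x < f a ∧ f a ≤ x₀} ≠ 0 ∧ μ.real {a | f a ≤ x₀} - ε < μ.real {a | f a ≤ x} := by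
  set κ := μ.map f
  have : IsProbabilityMeasure κ := Measure.isProbabilityMeasure_map hf.aemeasurable
  have : NullSingletonClass κ :=
    ⟨fun x => by rw [Measure.map_apply hf (measurableSet_singleton x)]; exact h x⟩
  have hcdf : ∀ x, cdf κ x = μ.real {a | f a ≤ x} := fun x => by
    rw [cdf_eq_real, map_measureReal_apply hf measurableSet_Iic]; rfl
  obtain ⟨x, hlow, hlt⟩ := exists_cdf_mem_Ioo κ (x₀ := x₀) (by rwa [hcdf]) hε
  refine ⟨x, ?_, by rw [← hcdf, ← hcdf]; exact hlow⟩
  have hIoc : κ (Ioc x x₀) = ENNReal.ofReal (cdf κ x₀ - cdf κ x) := by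
    rw [← (cdf κ).measure_Ioc, measure_cdf]
  rw [Measure.map_apply hf measurableSet_Ioc] at hIoc
  rw [show {a | x < f a ∧ f a ≤ x₀} = f ⁻¹' Ioc x x₀ from rfl, hIoc]
  simpa using hlt

end Atomless

lemma measure_prod_union_preimage_swap {α : Type*} [MeasurableSpace α] {μ : Measure α}
    [SFinite μ] {s : Set (α × α)} (hs : MeasurableSet s) (hdisj : Disjoint s (Prod.swap ⁻¹' s)) :
    μ.prod μ (s ∪ Prod.swap ⁻¹' s) = 2 * μ.prod μ s := by
  rw [measure_union hdisj (measurable_swap hs),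
    Measure.measurePreserving_swap.measure_preimage hs.nullMeasurableSet, two_mul]

lemma cond_prod {α β : Type*} [MeasurableSpace α] [MeasurableSpace β] {μ : Measure α}
    {ν : Measure β} [IsFiniteMeasure μ] [IsFiniteMeasure ν] {s : Set α} {t : Set β}
    (hs : MeasurableSet s) (ht : MeasurableSet t) :
    (μ.prod ν)[|s ×ˢ t] = μ[|s].prod ν[|t] := by
  refine (Measure.prod_eq fun s' t' hs' ht' => ?_).symm
  rw [cond_apply (hs.prod ht), prod_inter_prod, Measure.prod_prod, Measure.prod_prod,
    cond_apply hs, cond_apply ht,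
    ENNReal.mul_inv (Or.inr (measure_ne_top _ _)) (Or.inl (measure_ne_top _ _)), mul_mul_mul_comm]

def concordantPairs : Set ((ℝ × ℝ) × ℝ × ℝ) := {w | 0 < (w.1.1 - w.2.1) * (w.1.2 - w.2.2)}

def discordantPairs : Set ((ℝ × ℝ) × ℝ × ℝ) := {w | (w.1.1 - w.2.1) * (w.1.2 - w.2.2) < 0}

def IsPQD (μ : Measure (ℝ × ℝ)) : Prop :=
  ∀ x y : ℝ, (μ {p | p.1 ≤ x}).toReal * (μ {p | p.2 ≤ y}).toReal ≤
    (μ {p | p.1 ≤ x ∧ p.2 ≤ y}).toReal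

section Bivariate

variable {μ : Measure (ℝ × ℝ)}

lemma measurable_measure_setOf_fst_le : Measurable fun x : ℝ => μ {q | q.1 ≤ x} :=
  Monotone.measurable fun _ _ hxy => measure_mono fun _ hq => le_trans hq hxy

lemma measurable_measure_setOf_snd_le : Measurable fun y : ℝ => μ {q | q.2 ≤ y} :=
  Monotone.measurable fun _ _ hxy => measure_mono fun _ hq => le_trans hq hxy

lemma measure_setOf_lt_lt_eq (h₁ : ∀ x, μ {p | p.1 = x} = 0) (h₂ : ∀ y, μ {p | p.2 = y} = 0)
    (x y : ℝ) : μ {q | q.1 < x ∧ q.2 < y} = μ {q | q.1 ≤ x ∧ q.2 ≤ y} := by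
  refine measure_congr (eventuallyEq_set.2 ?_)
  filter_upwards [ae_ne_of_measure_setOf_eq (f := Prod.fst) h₁ x,
    ae_ne_of_measure_setOf_eq (f := Prod.snd) h₂ y] with q hx hy
  simp [lt_iff_le_and_ne, hx, hy]

lemma measure_survival_add_marginals [IsProbabilityMeasure μ] (h₁ : ∀ x, μ {p | p.1 = x} = 0)
    (h₂ : ∀ y, μ {p | p.2 = y} = 0) (u v : ℝ) :
    μ {q | u ≤ q.1 ∧ v ≤ q.2} + (μ {q | q.1 ≤ u} + μ {q | q.2 ≤ v}) =
      1 + μ {q | q.1 ≤ u ∧ q.2 ≤ v} := by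
  set A := {q : ℝ × ℝ | q.1 ≤ u}
  set B := {q : ℝ × ℝ | q.2 ≤ v}
  have hA : MeasurableSet A := measurable_fst measurableSet_Iic
  have hB : MeasurableSet B := measurable_snd measurableSet_Iic
  have hsurv : μ {q | u ≤ q.1 ∧ v ≤ q.2} = μ (A ∪ B)ᶜ := by
    refine measure_congr (eventuallyEq_set.2 ?_)
    filter_upwards [ae_ne_of_measure_setOf_eq (f := Prod.fst) h₁ u,
      ae_ne_of_measure_setOf_eq (f := Prod.snd) h₂ v] with q hx hy
    simp [A, B, le_iff_lt_or_eq, hx, hy, hx.symm, hy.symm]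
  rw [hsurv, ← measure_union_add_inter A hB, ← add_assoc, add_comm (μ _),
    measure_add_measure_compl (hA.union hB), measure_univ]
  rfl

lemma lintegral_measure_mul_measure_eq_lintegral_survival [SFinite μ] :
    ∫⁻ p, μ {q | q.1 ≤ p.1} * μ {q | q.2 ≤ p.2} ∂μ =
      ∫⁻ w, μ {q | w.1.1 ≤ q.1 ∧ w.2.2 ≤ q.2} ∂(μ.prod μ) := by
  set E := {z : (ℝ × ℝ) × (ℝ × ℝ) × ℝ × ℝ | z.2.1.1 ≤ z.1.1 ∧ z.2.2.2 ≤ z.1.2}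
  have hE : MeasurableSet E :=
    (measurableSet_le measurable_snd.fst.fst measurable_fst.fst).inter
      (measurableSet_le measurable_snd.snd.snd measurable_fst.snd)
  calc ∫⁻ p, μ {q | q.1 ≤ p.1} * μ {q | q.2 ≤ p.2} ∂μ
      = ∫⁻ p, μ.prod μ ({q | q.1 ≤ p.1} ×ˢ {q | q.2 ≤ p.2}) ∂μ := by
        simp only [Measure.prod_prod]
    _ = μ.prod (μ.prod μ) E := (Measure.prod_apply hE).symm
    _ = ∫⁻ w, μ {q | w.1.1 ≤ q.1 ∧ w.2.2 ≤ q.2} ∂(μ.prod μ) := Measure.prod_apply_symm hE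

lemma lintegral_measure_mul_measure_eq_lintegral_prod [IsProbabilityMeasure μ]
    (h₁ : ∀ x, μ {p | p.1 = x} = 0) (h₂ : ∀ y, μ {p | p.2 = y} = 0) :
    ∫⁻ p, μ {q | q.1 ≤ p.1} * μ {q | q.2 ≤ p.2} ∂μ =
      ∫⁻ w, μ {q | q.1 ≤ w.1.1 ∧ q.2 ≤ w.2.2} ∂(μ.prod μ) := by
  have hsurv : Measurable fun w : (ℝ × ℝ) × ℝ × ℝ => μ {q | w.1.1 ≤ q.1 ∧ w.2.2 ≤ q.2} := by
    have hS : MeasurableSet {z : (ℝ × ℝ) × ℝ × ℝ | z.1.1 ≤ z.2.1 ∧ z.1.2 ≤ z.2.2} :=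
      (measurableSet_le measurable_fst.fst measurable_snd.fst).inter
        (measurableSet_le measurable_fst.snd measurable_snd.snd)
    exact (measurable_measure_prodMk_left hS).comp (measurable_fst.fst.prodMk measurable_snd.snd)
  have hF₁ : Measurable fun w : (ℝ × ℝ) × ℝ × ℝ => μ {q | q.1 ≤ w.1.1} :=
    measurable_measure_setOf_fst_le.comp measurable_fst.fst
  have hF₂ : Measurable fun w : (ℝ × ℝ) × ℝ × ℝ => μ {q | q.2 ≤ w.2.2} :=
    measurable_measure_setOf_snd_le.comp measurable_snd.snd
  have hfst : ∫⁻ w, μ {q | q.1 ≤ w.1.1} ∂(μ.prod μ) = 2⁻¹ := by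
    rw [lintegral_prod _ hF₁.aemeasurable]
    simpa using lintegral_measure_setOf_le_eq_half measurable_fst h₁
  have hsnd : ∫⁻ w, μ {q | q.2 ≤ w.2.2} ∂(μ.prod μ) = 2⁻¹ := by
    rw [lintegral_prod _ hF₂.aemeasurable]
    simpa using lintegral_measure_setOf_le_eq_half measurable_snd h₂
  have key := lintegral_congr (μ := μ.prod μ) fun w =>
    measure_survival_add_marginals h₁ h₂ w.1.1 w.2.2
  rw [lintegral_add_left hsurv, lintegral_add_left hF₁, hfst, hsnd, ENNReal.inv_two_add_inv_two,
    lintegral_add_left measurable_const, lintegral_one, measure_univ, add_comm] at key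
  rw [lintegral_measure_mul_measure_eq_lintegral_survival]
  exact (ENNReal.add_right_inj ENNReal.one_ne_top).1 key

lemma measure_prod_concordantPairs [IsProbabilityMeasure μ] (h₁ : ∀ x, μ {p | p.1 = x} = 0)
    (h₂ : ∀ y, μ {p | p.2 = y} = 0) :
    μ.prod μ concordantPairs = 2 * ∫⁻ p, μ {q | q.1 ≤ p.1 ∧ q.2 ≤ p.2} ∂μ := by
  set s := {w : (ℝ × ℝ) × ℝ × ℝ | w.2.1 < w.1.1 ∧ w.2.2 < w.1.2}
  have hs : MeasurableSet s :=
    (measurableSet_lt measurable_snd.fst measurable_fst.fst).inter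
      (measurableSet_lt measurable_snd.snd measurable_fst.snd)
  have hsplit : concordantPairs = s ∪ Prod.swap ⁻¹' s := by
    ext w; simp [concordantPairs, s, mul_pos_iff, sub_pos, sub_neg]
  have hdisj : Disjoint s (Prod.swap ⁻¹' s) :=
    disjoint_left.2 fun w hw hw' => (hw.1.trans hw'.1).false
  rw [hsplit, measure_prod_union_preimage_swap hs hdisj, Measure.prod_apply hs]
  exact congrArg _ (lintegral_congr fun p => measure_setOf_lt_lt_eq h₁ h₂ p.1 p.2)

lemma measure_prod_concordantPairs_add_discordantPairs [IsProbabilityMeasure μ]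
    (h₁ : ∀ x, μ {p | p.1 = x} = 0) (h₂ : ∀ y, μ {p | p.2 = y} = 0) :
    μ.prod μ concordantPairs + μ.prod μ discordantPairs = 1 := by
  have hdisj : Disjoint concordantPairs discordantPairs :=
    disjoint_left.2 fun _ hc hd => (lt_asymm (α := ℝ) hc hd).elim
  have hdisc : MeasurableSet discordantPairs := measurableSet_lt (by fun_prop) measurable_const
  rw [← measure_union hdisj hdisc, ← measure_univ (μ := μ.prod μ)]
  refine measure_congr (ae_eq_univ.2 (measure_mono_null (fun w hw => ?_)
    (measure_union_null (measure_prod_self_setOf_eq_eq_zero measurable_fst h₁)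
      (measure_prod_self_setOf_eq_eq_zero measurable_snd h₂))))
  simp only [concordantPairs, discordantPairs, mem_compl_iff, mem_union, mem_ofPred_eq, not_or,
    not_lt] at hw ⊢
  rcases mul_eq_zero.1 (le_antisymm hw.1 hw.2) with h | h
  · exact Or.inl (sub_eq_zero.1 h)
  · exact Or.inr (sub_eq_zero.1 h)

lemma IsPQD.measure_mul_le [IsFiniteMeasure μ] (h : IsPQD μ) (x y : ℝ) :
    μ {p | p.1 ≤ x} * μ {p | p.2 ≤ y} ≤ μ {p | p.1 ≤ x ∧ p.2 ≤ y} := by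
  have hxy := h x y
  rw [← ENNReal.toReal_mul] at hxy
  exact (ENNReal.toReal_le_toReal (by finiteness) (by finiteness)).1 hxy

lemma measureReal_quadrant_le [IsFiniteMeasure μ] {u v x y : ℝ} (hu : u ≤ x) (hv : v ≤ y) :
    μ.real {p | p.1 ≤ x ∧ p.2 ≤ y} ≤ μ.real {p | p.1 ≤ u ∧ p.2 ≤ v} +
      (μ.real {p | p.1 ≤ x} - μ.real {p | p.1 ≤ u}) +
      (μ.real {p | p.2 ≤ y} - μ.real {p | p.2 ≤ v}) := by
  rw [← measureReal_sdiff (s₁ := {p : ℝ × ℝ | p.1 ≤ x}) (s₂ := {p | p.1 ≤ u})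
      (fun p hp => le_trans hp hu) (measurable_fst measurableSet_Iic),
    ← measureReal_sdiff (s₁ := {p : ℝ × ℝ | p.2 ≤ y}) (s₂ := {p | p.2 ≤ v})
      (fun p hp => le_trans hp hv) (measurable_snd measurableSet_Iic)]
  refine (measureReal_mono ?_).trans ((measureReal_union_le _ _).trans
    (add_le_add_left (measureReal_union_le _ _) _))
  rintro p ⟨hx, hy⟩
  by_cases hpu : p.1 ≤ u
  · by_cases hpv : p.2 ≤ v
    · exact Or.inl (Or.inl ⟨hpu, hpv⟩)
    · exact Or.inr ⟨hy, hpv⟩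
  · exact Or.inl (Or.inr ⟨hx, hpu⟩)

lemma exists_box_measure_mul_lt [IsProbabilityMeasure μ] (h₁ : ∀ x, μ {p | p.1 = x} = 0)
    (h₂ : ∀ y, μ {p | p.2 = y} = 0) {x₀ y₀ : ℝ}
    (hgap : (μ {p | p.1 ≤ x₀}).toReal * (μ {p | p.2 ≤ y₀}).toReal <
      (μ {p | p.1 ≤ x₀ ∧ p.2 ≤ y₀}).toReal) :
    ∃ x y, μ {p | x < p.1 ∧ p.1 ≤ x₀} ≠ 0 ∧ μ {p | y < p.2 ∧ p.2 ≤ y₀} ≠ 0 ∧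
      ∀ u v, x < u → u ≤ x₀ → y < v → v ≤ y₀ →
        μ {p | p.1 ≤ u} * μ {p | p.2 ≤ v} < μ {p | p.1 ≤ u ∧ p.2 ≤ v} := by
  set a := μ.real {p | p.1 ≤ x₀}
  set b := μ.real {p | p.2 ≤ y₀}
  set c := μ.real {p | p.1 ≤ x₀ ∧ p.2 ≤ y₀}
  change a * b < c at hgap
  have hc : 0 < c := (mul_nonneg measureReal_nonneg measureReal_nonneg).trans_lt hgap
  have ha : 0 < a := hc.trans_le (measureReal_mono fun p hp => hp.1)
  have hb : 0 < b := hc.trans_le (measureReal_mono fun p hp => hp.2)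
  -- moving the corner through strips of marginal mass `< ε` changes `F` by less than `2ε = c - ab`
  have hε : 0 < (c - a * b) / 2 := by linarith
  obtain ⟨x, hx, hax⟩ := exists_measure_setOf_mem_Ioc_ne_zero measurable_fst h₁ ha hε
  obtain ⟨y, hy, hby⟩ := exists_measure_setOf_mem_Ioc_ne_zero measurable_snd h₂ hb hε
  refine ⟨x, y, hx, hy, fun u v hxu hux hyv hvy => ?_⟩
  rw [← ENNReal.toReal_lt_toReal (by finiteness) (by finiteness), ENNReal.toReal_mul]
  change μ.real _ * μ.real _ < μ.real _
  have hFxu : μ.real {p | p.1 ≤ x} ≤ μ.real {p | p.1 ≤ u} :=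
    measureReal_mono fun p hp => le_trans hp hxu.le
  have hFyv : μ.real {p | p.2 ≤ y} ≤ μ.real {p | p.2 ≤ v} :=
    measureReal_mono fun p hp => le_trans hp hyv.le
  have hprod : μ.real {p | p.1 ≤ u} * μ.real {p | p.2 ≤ v} ≤ a * b :=
    mul_le_mul (measureReal_mono fun p hp => le_trans hp hux)
      (measureReal_mono fun p hp => le_trans hp hvy) measureReal_nonneg ha.le
  linarith [measureReal_quadrant_le (μ := μ) hux hvy]

lemma inv_four_lt_lintegral_prod [IsProbabilityMeasure μ]
    (h₁ : ∀ x, μ {p | p.1 = x} = 0) (h₂ : ∀ y, μ {p | p.2 = y} = 0) (hPQD : IsPQD μ)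
    (hstrict : ∃ x y : ℝ, (μ {p | p.1 ≤ x}).toReal * (μ {p | p.2 ≤ y}).toReal <
      (μ {p | p.1 ≤ x ∧ p.2 ≤ y}).toReal) :
    4⁻¹ < ∫⁻ w, μ {q | q.1 ≤ w.1.1 ∧ q.2 ≤ w.2.2} ∂(μ.prod μ) := by
  have hF : Measurable fun w : (ℝ × ℝ) × ℝ × ℝ => μ {q | q.1 ≤ w.1.1 ∧ q.2 ≤ w.2.2} := by
    have hS : MeasurableSet {z : (ℝ × ℝ) × ℝ × ℝ | z.2.1 ≤ z.1.1 ∧ z.2.2 ≤ z.1.2} :=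
      (measurableSet_le measurable_snd.fst measurable_fst.fst).inter
        (measurableSet_le measurable_snd.snd measurable_fst.snd)
    exact (measurable_measure_prodMk_left hS).comp (measurable_fst.fst.prodMk measurable_snd.snd)
  have hindep : ∫⁻ w, μ {q | q.1 ≤ w.1.1} * μ {q | q.2 ≤ w.2.2} ∂(μ.prod μ) = 4⁻¹ := by
    rw [lintegral_prod_mul (f := fun p : ℝ × ℝ => μ {q | q.1 ≤ p.1})
      (g := fun p : ℝ × ℝ => μ {q | q.2 ≤ p.2})
      (measurable_measure_setOf_fst_le.comp measurable_fst).aemeasurable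
      (measurable_measure_setOf_snd_le.comp measurable_snd).aemeasurable,
      lintegral_measure_setOf_le_eq_half measurable_fst h₁,
      lintegral_measure_setOf_le_eq_half measurable_snd h₂, ← ENNReal.mul_inv (by simp) (by simp)]
    norm_num
  obtain ⟨x₀, y₀, hgap⟩ := hstrict
  obtain ⟨x, y, hx, hy, hbox⟩ := exists_box_measure_mul_lt h₁ h₂ hgap
  rw [← hindep]
  refine lintegral_strict_mono_of_ae_le_of_frequently_ae_lt hF.aemeasurable
    (by rw [hindep]; finiteness) (ae_of_all _ fun w => hPQD.measure_mul_le _ _) ?_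
  rw [frequently_ae_iff, ← pos_iff_ne_zero]
  calc 0 < μ.prod μ ({p | x < p.1 ∧ p.1 ≤ x₀} ×ˢ {p | y < p.2 ∧ p.2 ≤ y₀}) := by
        rw [Measure.prod_prod]; exact pos_iff_ne_zero.2 (mul_ne_zero hx hy)
    _ ≤ _ := measure_mono fun w ⟨⟨hxu, hux⟩, hyv, hvy⟩ => (hbox _ _ hxu hux hyv hvy).ne

theorem measure_prod_discordantPairs_lt_concordantPairs [IsProbabilityMeasure μ]
    (h₁ : ∀ x, μ {p | p.1 = x} = 0) (h₂ : ∀ y, μ {p | p.2 = y} = 0) (hPQD : IsPQD μ)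
    (hstrict : ∃ x y : ℝ, (μ {p | p.1 ≤ x}).toReal * (μ {p | p.2 ≤ y}).toReal <
      (μ {p | p.1 ≤ x ∧ p.2 ≤ y}).toReal) :
    μ.prod μ discordantPairs < μ.prod μ concordantPairs := by
  have hI : 4⁻¹ < ∫⁻ p, μ {q | q.1 ≤ p.1 ∧ q.2 ≤ p.2} ∂μ :=
    calc 4⁻¹ < ∫⁻ w, μ {q | q.1 ≤ w.1.1 ∧ q.2 ≤ w.2.2} ∂(μ.prod μ) :=
          inv_four_lt_lintegral_prod h₁ h₂ hPQD hstrict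
      _ = ∫⁻ p, μ {q | q.1 ≤ p.1} * μ {q | q.2 ≤ p.2} ∂μ :=
          (lintegral_measure_mul_measure_eq_lintegral_prod h₁ h₂).symm
      _ ≤ _ := lintegral_mono fun p => hPQD.measure_mul_le p.1 p.2
  have hconc : 2⁻¹ < μ.prod μ concordantPairs := by
    rw [measure_prod_concordantPairs h₁ h₂]
    calc (2⁻¹ : ℝ≥0∞) = 2 * 4⁻¹ := by
          rw [show (4 : ℝ≥0∞) = 2 * 2 by norm_num, ENNReal.mul_inv (by simp) (by simp),
            ENNReal.mul_inv_cancel_left (by simp) (by simp)]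
      _ < _ := ENNReal.mul_lt_mul_right (by simp) (by simp) hI
  by_contra! hle
  refine lt_irrefl (1 : ℝ≥0∞) ?_
  calc (1 : ℝ≥0∞) = 2⁻¹ + 2⁻¹ := ENNReal.inv_two_add_inv_two.symm
    _ < μ.prod μ concordantPairs + μ.prod μ discordantPairs :=
        ENNReal.add_lt_add hconc (hconc.trans_le hle)
    _ = 1 := measure_prod_concordantPairs_add_discordantPairs h₁ h₂

end Bivariate

/-- if the conditional distribution of `(X,Y)` given `X > η_X, Y > η_Y` is
positively quadrant dependent (with strict inequality somewhere), then `T(η_X, η_Y) > 0`. -/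
theorem Tpop_pos_of_PQD (ν : Measure (ℝ × ℝ)) [IsProbabilityMeasure ν]
    (hcont : ContinuousMarginals ν) (ηX ηY : ℝ)
    (hpos : 0 < ν {p | ηX < p.1 ∧ ηY < p.2})
    (hPQD : ∀ x y : ℝ,
      ((ν[|{p | ηX < p.1 ∧ ηY < p.2}]) {p | p.1 ≤ x}).toReal *
          ((ν[|{p | ηX < p.1 ∧ ηY < p.2}]) {p | p.2 ≤ y}).toReal
        ≤ ((ν[|{p | ηX < p.1 ∧ ηY < p.2}]) {p | p.1 ≤ x ∧ p.2 ≤ y}).toReal)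
    (hstrict : ∃ x y : ℝ,
      ((ν[|{p | ηX < p.1 ∧ ηY < p.2}]) {p | p.1 ≤ x}).toReal *
          ((ν[|{p | ηX < p.1 ∧ ηY < p.2}]) {p | p.2 ≤ y}).toReal
        < ((ν[|{p | ηX < p.1 ∧ ηY < p.2}]) {p | p.1 ≤ x ∧ p.2 ≤ y}).toReal) :
    0 < Tpop ν ηX ηY := by
  set A := {p : ℝ × ℝ | ηX < p.1 ∧ ηY < p.2}
  have hA : MeasurableSet A :=
    (measurableSet_lt measurable_const measurable_fst).inter
      (measurableSet_lt measurable_const measurable_snd)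
  have : IsProbabilityMeasure (ν[|A]) := cond_isProbabilityMeasure hpos.ne'
  have hpair : pairAbove ηX ηY = A ×ˢ A := by
    ext w; simp only [pairAbove, A, mem_ofPred_eq, mem_prod]; tauto
  rw [Tpop, hpair, cond_prod hA hA]
  exact sub_pos.2 <| ENNReal.toReal_strict_mono (measure_ne_top _ _) <|
    measure_prod_discordantPairs_lt_concordantPairs
      (fun x => cond_absolutelyContinuous (hcont x).1)
      (fun y => cond_absolutelyContinuous (hcont y).2) hPQD hstrict
end
end

section
/- Let (X,Y) be uniformly distributed on [0,1]², let j, k be positive integers, set U_j = 1 − 2^{−j} and U_k = 1 − 2^{−k}, and let γ_j, γ_k ∈ [0,1]. Then E[f_{(U_j,γ_j)}(X,Y)·f_{(U_k,γ_k)}(X,Y)] = 1 + γ_j γ_k (1−U_j)(1−U_k) / (9·2^{3|j−k|}). -/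
/-!
Write `f_{(U,γ)}(x,y) = 1 + γ g_U(x) g_U(y)`, where `g_U(x) = 1 - 2(x-U)/(1-U)` on `[U,1]` and
`0` elsewhere. Each `g_U` has mean zero on `[0,1]`, so on the product measure the expansion of
`f_{(U,γ)} f_{(V,δ)}` collapses to `1 + γδ (∫ g_U g_V)²`, and for `U ≤ V` a polynomial integral
gives `∫ g_U g_V = (1-V)²/(3(1-U))`. With `1 - U = 2^{-j}` and `1 - V = 2^{-k}` this is the claim.
-/

open MeasureTheory ProbabilityTheory Filter

noncomputable section

/-- The Farlie–Gumbel–Morgenstern-type density `f_{(U,γ)}` on `[0,1]²`. -/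
def fgm (U γ x y : ℝ) : ℝ :=
  if U ≤ x ∧ U ≤ y then
    1 + γ * (1 - 2 * (x - U) / (1 - U)) * (1 - 2 * (y - U) / (1 - U))
  else 1

/-- The probability distribution on `[0,1]²` with density `f_{(U,γ)}`. -/
def fgmMeasure (U γ : ℝ) : Measure (ℝ × ℝ) :=
  (volume.restrict (Set.Icc (0 : ℝ) 1 ×ˢ Set.Icc (0 : ℝ) 1)).withDensity
    fun p => ENNReal.ofReal (fgm U γ p.1 p.2)

open Set

def fgmProfile (U x : ℝ) : ℝ := if U ≤ x then 1 - 2 * (x - U) / (1 - U) else 0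

lemma fgm_eq_one_add_mul_fgmProfile (U γ x y : ℝ) :
    fgm U γ x y = 1 + γ * (fgmProfile U x * fgmProfile U y) := by
  unfold fgm fgmProfile
  split_ifs <;> grind

lemma fgmProfile_eq_indicator (U : ℝ) :
    fgmProfile U = (Ici U).indicator fun x => 1 - 2 * (x - U) / (1 - U) := by
  ext x
  by_cases hx : U ≤ x <;> simp [fgmProfile, hx]

lemma fgmProfile_mul_eq_indicator {U V : ℝ} (hUV : U ≤ V) :
    (fun x => fgmProfile U x * fgmProfile V x) =
      (Ici V).indicator fun x => (1 - 2 * (x - U) / (1 - U)) * (1 - 2 * (x - V) / (1 - V)) := by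
  ext x
  by_cases hx : V ≤ x
  · simp [fgmProfile, hx, hUV.trans hx]
  · simp [fgmProfile, hx]

lemma integrableOn_fgmProfile (U : ℝ) : IntegrableOn (fgmProfile U) (Icc 0 1) := by
  rw [fgmProfile_eq_indicator]
  exact (Continuous.integrableOn_Icc (by fun_prop)).indicator measurableSet_Ici

lemma integrableOn_fgmProfile_mul {U V : ℝ} (hUV : U ≤ V) :
    IntegrableOn (fun x => fgmProfile U x * fgmProfile V x) (Icc 0 1) := by
  rw [fgmProfile_mul_eq_indicator hUV]
  exact (Continuous.integrableOn_Icc (by fun_prop)).indicator measurableSet_Ici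

lemma setIntegral_Icc_indicator_Ici {U : ℝ} (hU0 : 0 ≤ U) (hU1 : U ≤ 1) (f : ℝ → ℝ) :
    ∫ x in Icc 0 1, (Ici U).indicator f x = ∫ x in U..1, f x := by
  have hUIcc : Icc 0 1 ∩ Ici U = Icc U 1 := by
    ext x
    simp only [mem_inter_iff, mem_Icc, mem_Ici]
    grind
  rw [setIntegral_indicator measurableSet_Ici, hUIcc, integral_Icc_eq_integral_Ioc,
    intervalIntegral.integral_of_le hU1]

lemma setIntegral_fgmProfile {U : ℝ} (hU0 : 0 ≤ U) (hU1 : U < 1) :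
    ∫ x in Icc 0 1, fgmProfile U x = 0 := by
  have hU : 1 - U ≠ 0 := by linarith
  have hF : ∀ x ∈ uIcc U 1, HasDerivAt (fun x => x - (x - U) ^ 2 / (1 - U))
      (1 - 2 * (x - U) / (1 - U)) x := fun x _ => by
    refine ((hasDerivAt_id x).sub
      ((((hasDerivAt_id x).sub_const U).pow 2).div_const (1 - U))).congr_deriv ?_
    simp only [id_eq]
    ring
  rw [fgmProfile_eq_indicator, setIntegral_Icc_indicator_Ici hU0 hU1.le,
    intervalIntegral.integral_eq_sub_of_hasDerivAt hF
      (Continuous.intervalIntegrable (by fun_prop) _ _)]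
  field_simp
  ring

lemma setIntegral_fgmProfile_mul {U V : ℝ} (hU0 : 0 ≤ U) (hUV : U ≤ V) (hV1 : V < 1) :
    ∫ x in Icc 0 1, fgmProfile U x * fgmProfile V x = (1 - V) ^ 2 / (3 * (1 - U)) := by
  have hU : 1 - U ≠ 0 := by linarith
  have hV : 1 - V ≠ 0 := by linarith
  -- with `w = 1 + V - 2x` the integrand is `((U - V) w + w²) / ((1 - U)(1 - V))`
  have hF : ∀ x ∈ uIcc V 1, HasDerivAt
      (fun x => -((U - V) * (1 + V - 2 * x) ^ 2 / 4 + (1 + V - 2 * x) ^ 3 / 6) /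
        ((1 - U) * (1 - V)))
      ((1 - 2 * (x - U) / (1 - U)) * (1 - 2 * (x - V) / (1 - V))) x := fun x _ => by
    have hw : HasDerivAt (fun x => 1 + V - 2 * x) (-2) x := by
      simpa using ((hasDerivAt_id x).const_mul 2).const_sub (1 + V)
    refine ((((hw.pow 2).const_mul (U - V)).div_const 4).add
      ((hw.pow 3).div_const 6)).neg.div_const ((1 - U) * (1 - V)) |>.congr_deriv ?_
    field_simp
    ring
  rw [fgmProfile_mul_eq_indicator hUV, setIntegral_Icc_indicator_Ici (hU0.trans hUV) hV1.le,
    intervalIntegral.integral_eq_sub_of_hasDerivAt hF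
      (Continuous.intervalIntegrable (by fun_prop) _ _)]
  field_simp
  ring

lemma integral_prod_one_add_mul_one_add {α : Type*} [MeasurableSpace α] {μ : Measure α}
    [IsProbabilityMeasure μ] {a b : α → ℝ} (ha : Integrable a μ) (hb : Integrable b μ)
    (hab : Integrable (fun x => a x * b x) μ) (ha0 : ∫ x, a x ∂μ = 0) (hb0 : ∫ x, b x ∂μ = 0)
    (γ δ : ℝ) :
    ∫ p, (1 + γ * (a p.1 * a p.2)) * (1 + δ * (b p.1 * b p.2)) ∂μ.prod μ =
      1 + γ * δ * (∫ x, a x * b x ∂μ) ^ 2 := by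
  have hexpand : ∀ p : α × α, (1 + γ * (a p.1 * a p.2)) * (1 + δ * (b p.1 * b p.2)) =
      1 + γ * (a p.1 * a p.2) + δ * (b p.1 * b p.2) +
        γ * δ * ((a p.1 * b p.1) * (a p.2 * b p.2)) := fun p => by ring
  have haa := (ha.mul_prod ha).const_mul γ
  have hbb := (hb.mul_prod hb).const_mul δ
  have habab := (hab.mul_prod hab).const_mul (γ * δ)
  simp_rw [hexpand]
  rw [integral_add ?_ habab, integral_add ?_ hbb, integral_add (integrable_const 1) haa,
    integral_const_mul, integral_const_mul, integral_const_mul, integral_prod_mul,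
    integral_prod_mul, integral_prod_mul (fun x => a x * b x) (fun x => a x * b x), ha0, hb0]
  · simp only [integral_const, probReal_univ, smul_eq_mul]
    ring
  · exact (integrable_const 1).add haa
  · exact ((integrable_const 1).add haa).add hbb

lemma setIntegral_fgm_mul_fgm {U V : ℝ} (hU0 : 0 ≤ U) (hUV : U ≤ V) (hV1 : V < 1) (γ δ : ℝ) :
    ∫ p in Icc (0 : ℝ) 1 ×ˢ Icc (0 : ℝ) 1, fgm U γ p.1 p.2 * fgm V δ p.1 p.2 =
      1 + γ * δ * ((1 - V) ^ 2 / (3 * (1 - U))) ^ 2 := by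
  have : IsProbabilityMeasure (volume.restrict (Icc (0 : ℝ) 1)) := ⟨by simp⟩
  rw [Measure.volume_eq_prod, ← Measure.prod_restrict]
  simp_rw [fgm_eq_one_add_mul_fgmProfile]
  rw [integral_prod_one_add_mul_one_add (integrableOn_fgmProfile U) (integrableOn_fgmProfile V)
    (integrableOn_fgmProfile_mul hUV) (setIntegral_fgmProfile hU0 (hUV.trans_lt hV1))
    (setIntegral_fgmProfile (hU0.trans hUV) hV1), setIntegral_fgmProfile_mul hU0 hUV hV1]

theorem fgm_cross_moment_general (j k : ℕ) (γj γk : ℝ) :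
    (∫ p in Set.Icc (0 : ℝ) 1 ×ˢ Set.Icc (0 : ℝ) 1,
        fgm (1 - 1 / 2 ^ j) γj p.1 p.2 * fgm (1 - 1 / 2 ^ k) γk p.1 p.2)
      = 1 + γj * γk * (1 - (1 - 1 / 2 ^ j)) * (1 - (1 - 1 / 2 ^ k))
          / (9 * 2 ^ (3 * ((j : ℤ) - (k : ℤ)).natAbs)) := by
  wlog hjk : j ≤ k generalizing j k γj γk
  · have hdist : ((k : ℤ) - j).natAbs = ((j : ℤ) - k).natAbs := by omega
    simp_rw [mul_comm (fgm (1 - 1 / 2 ^ j) γj _ _), this k j γk γj (by omega), hdist]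
    ring
  obtain ⟨d, rfl⟩ := Nat.exists_eq_add_of_le hjk
  have hdist : ((j : ℤ) - ↑(j + d)).natAbs = d := by omega
  rw [setIntegral_fgm_mul_fgm (sub_nonneg.2 ?_) (sub_le_sub_left ?_ 1)
    (sub_lt_self 1 (by positivity)), hdist, pow_add, pow_mul']
  · field_simp
    ring
  · simpa using one_div_pow_le_one_div_pow_of_le (one_le_two (α := ℝ)) (Nat.zero_le j)
  · exact one_div_pow_le_one_div_pow_of_le one_le_two hjk

/-- cross moment of two FGM densities at `U_j = 1 − 2^{−j}`, `U_k = 1 − 2^{−k}`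
under the uniform distribution on the unit square. -/
theorem fgm_cross_moment (j k : ℕ) (hj : 1 ≤ j) (hk : 1 ≤ k)
    (γj γk : ℝ) (hγj : γj ∈ Set.Icc (0 : ℝ) 1) (hγk : γk ∈ Set.Icc (0 : ℝ) 1) :
    (∫ p in Set.Icc (0 : ℝ) 1 ×ˢ Set.Icc (0 : ℝ) 1,
        fgm (1 - 1 / 2 ^ j) γj p.1 p.2 * fgm (1 - 1 / 2 ^ k) γk p.1 p.2)
      = 1 + γj * γk * (1 - (1 - 1 / 2 ^ j)) * (1 - (1 - 1 / 2 ^ k))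
          / (9 * 2 ^ (3 * ((j : ℤ) - (k : ℤ)).natAbs)) :=
  fgm_cross_moment_general j k γj γk

end
end
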